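/- arXiv:1811.00115 — 2 statements merged into one kernel-verified Lean document; each statement's English description precedes it below -/
import Mathlib

section
/- (Iso-Wasserstein inequality) Let n ≥ 1, R > 0, and let B_{r₁} = B(0, r₁) and B_{r₂} = B(0, r₂) be two concentric open balls in ℝⁿ centered at the origin with 0 < r₁ ≤ r₂ ≤ R. Then for every measurable set A ⊆ B(0, R) with vol_n(A) = vol_n(B_{r₂}), one has W₂(P_A, P_{B_{r₁}}) ≥ W₂(P_{B_{r₂}}, P_{B_{r₁}}). In other words, among all subsets of B(0, R) of a fixed volume, the concentric ball minimizes the L²-Wasserstein distance of its uniform measure to the uniform measure on a smaller concentric ball. -/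
open MeasureTheory Metric Set
open scoped ENNReal NNReal

noncomputable section

/-- The uniform probability measure on a set `S ⊆ ℝⁿ`: Lebesgue measure restricted to `S`
and normalized. -/
def unif {n : ℕ} (S : Set (EuclideanSpace ℝ (Fin n))) : Measure (EuclideanSpace ℝ (Fin n)) :=
  (volume S)⁻¹ • volume.restrict S

/-- The set of couplings of two measures `μ, ν` on `ℝⁿ`: measures on the product whose
marginals are `μ` and `ν`. -/
def couplings {n : ℕ} (μ ν : Measure (EuclideanSpace ℝ (Fin n))) :
    Set (Measure (EuclideanSpace ℝ (Fin n) × EuclideanSpace ℝ (Fin n))) :=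
  {γ | γ.map Prod.fst = μ ∧ γ.map Prod.snd = ν}

/-- The `L²`-Wasserstein distance between two measures on `ℝⁿ` (valued in `ℝ≥0∞`):
the infimum over all couplings `γ` of `(∫ ‖a − b‖² dγ(a, b))^{1/2}`. -/
def W2 {n : ℕ} (μ ν : Measure (EuclideanSpace ℝ (Fin n))) : ℝ≥0∞ :=
  ⨅ γ ∈ couplings μ ν, (∫⁻ w, edist w.1 w.2 ^ 2 ∂γ) ^ (1 / 2 : ℝ)

/-!
By Minkowski's inequality in `L²(γ)` for a coupling `γ` of `μ` and `ν`, `W₂(μ, ν)` is at least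
the difference of the root second moments `‖x‖_{L²(μ)} - ‖x‖_{L²(ν)}`, and the coupling
`b ↦ (c b, b)` between the dilate of `ν` by `c ≥ 1` and `ν` attains this bound. The dilation by
`r₂ / r₁` carries `P_{B_{r₁}}` to `P_{B_{r₂}}`, so `W₂(P_{B_{r₂}}, P_{B_{r₁}})` is the difference
of the root second moments of the two balls. By the bathtub principle, the ball `B_{r₂}` has the
smallest second moment among the sets of its volume, so the root second moment of `P_A` is at
least that of `P_{B_{r₂}}`.
-/

open scoped Pointwise

section Wasserstein

variable {n : ℕ}

lemma lintegral_edist_sq_rpow_eq_eLpNorm_sub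
    (γ : Measure (EuclideanSpace ℝ (Fin n) × EuclideanSpace ℝ (Fin n))) :
    (∫⁻ w, edist w.1 w.2 ^ 2 ∂γ) ^ (1 / 2 : ℝ) = eLpNorm (fun w => w.1 - w.2) 2 γ := by
  rw [eLpNorm_eq_lintegral_rpow_enorm_toReal two_ne_zero ENNReal.ofNat_ne_top]
  simp [edist_eq_enorm_sub]

lemma eLpNorm_id_sub_le_W2 (μ ν : Measure (EuclideanSpace ℝ (Fin n))) :
    eLpNorm id 2 μ - eLpNorm id 2 ν ≤ W2 μ ν := by
  refine le_iInf₂ fun γ ⟨hfst, hsnd⟩ => ?_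
  rw [tsub_le_iff_right, lintegral_edist_sq_rpow_eq_eLpNorm_sub, ← hfst, ← hsnd,
    eLpNorm_map_measure aestronglyMeasurable_id measurable_fst.aemeasurable,
    eLpNorm_map_measure aestronglyMeasurable_id measurable_snd.aemeasurable]
  calc eLpNorm (id ∘ Prod.fst) 2 γ
      = eLpNorm ((fun w => w.1 - w.2) + id ∘ Prod.snd) 2 γ := by
        congr 1; ext w : 1; simp
    _ ≤ _ := eLpNorm_add_le (by fun_prop) (by fun_prop) one_le_two

lemma eLpNorm_id_map_smul (ν : Measure (EuclideanSpace ℝ (Fin n))) (c : ℝ) (p : ℝ≥0∞) :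
    eLpNorm id p (ν.map (c • ·)) = ‖c‖ₑ * eLpNorm id p ν := by
  rw [eLpNorm_map_measure aestronglyMeasurable_id (by fun_prop), ← eLpNorm_const_smul]
  rfl

lemma W2_map_smul_le (ν : Measure (EuclideanSpace ℝ (Fin n))) (c : ℝ) :
    W2 (ν.map (c • ·)) ν ≤ ‖c - 1‖ₑ * eLpNorm id 2 ν := by
  have hf : Measurable fun b : EuclideanSpace ℝ (Fin n) => (c • b, b) := by fun_prop
  have hcoupling : ν.map (fun b => (c • b, b)) ∈ couplings (ν.map (c • ·)) ν := by
    refine ⟨?_, ?_⟩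
    · rw [Measure.map_map measurable_fst hf]; rfl
    · rw [Measure.map_map measurable_snd hf]; exact Measure.map_id
  refine (iInf₂_le _ hcoupling).trans_eq ?_
  rw [lintegral_edist_sq_rpow_eq_eLpNorm_sub,
    eLpNorm_map_measure (by fun_prop) hf.aemeasurable, ← eLpNorm_const_smul]
  congr 1; ext b : 1; simp [sub_smul]

lemma W2_map_smul_eq {c : ℝ} (hc : 1 ≤ c) (ν : Measure (EuclideanSpace ℝ (Fin n)))
    (hν : eLpNorm id 2 ν ≠ ∞) :
    W2 (ν.map (c • ·)) ν = eLpNorm id 2 (ν.map (c • ·)) - eLpNorm id 2 ν := by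
  refine le_antisymm ((W2_map_smul_le ν c).trans_eq ?_) (eLpNorm_id_sub_le_W2 _ _)
  rw [eLpNorm_id_map_smul, Real.enorm_eq_ofReal (sub_nonneg.2 hc),
    Real.enorm_eq_ofReal (zero_le_one.trans hc), ENNReal.ofReal_sub _ zero_le_one,
    ENNReal.ofReal_one, ENNReal.sub_mul fun _ _ => hν, one_mul]

end Wasserstein

lemma setLIntegral_sublevel_le {α : Type*} [MeasurableSpace α] (μ : Measure α) {s t : Set α}
    (hs : MeasurableSet s) (ht : MeasurableSet t) (hst : μ s = μ t) (ht_fin : μ t ≠ ∞)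
    {g : α → ℝ≥0∞} (hg : Measurable g) (C : ℝ≥0∞)
    (hg_le : ∀ x ∈ t, g x ≤ C) (hg_ge : ∀ x ∉ t, C ≤ g x) :
    ∫⁻ x in t, g x ∂μ ≤ ∫⁻ x in s, g x ∂μ := by
  have h_inter : μ (t ∩ s) ≠ ∞ := measure_ne_top_of_subset inter_subset_left ht_fin
  have h_diff : μ (t \ s) = μ (s \ t) := by
    refine (ENNReal.add_right_inj h_inter).mp ?_
    rw [add_comm, measure_sdiff_add_inter t hs, inter_comm, add_comm,
      measure_sdiff_add_inter s ht, hst]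
  calc ∫⁻ x in t, g x ∂μ
      = ∫⁻ x in t ∩ s, g x ∂μ + ∫⁻ x in t \ s, g x ∂μ := (lintegral_inter_add_sdiff _ _ hs).symm
    _ ≤ ∫⁻ x in t ∩ s, g x ∂μ + ∫⁻ x in s \ t, g x ∂μ := by
        refine add_le_add le_rfl ?_
        calc ∫⁻ x in t \ s, g x ∂μ
            ≤ ∫⁻ _ in t \ s, C ∂μ := setLIntegral_mono measurable_const fun x hx => hg_le x hx.1
          _ = ∫⁻ _ in s \ t, C ∂μ := by rw [setLIntegral_const, setLIntegral_const, h_diff]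
          _ ≤ ∫⁻ x in s \ t, g x ∂μ := setLIntegral_mono hg fun x hx => hg_ge x hx.2
    _ = ∫⁻ x in s, g x ∂μ := by rw [inter_comm, lintegral_inter_add_sdiff _ _ ht]

section Uniform

variable {n : ℕ}

lemma map_smul_unif {c : ℝ} (hc : c ≠ 0) (S : Set (EuclideanSpace ℝ (Fin n))) :
    (unif S).map (c • ·) = unif (c • S) := by
  let e := MeasurableEquiv.smul₀ (α := EuclideanSpace ℝ (Fin n)) c hc
  have hk : ENNReal.ofReal (|c| ^ n) ≠ 0 := by simp [hc]
  have hrestrict : (volume.restrict S).map (c • ·)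
      = (ENNReal.ofReal (|c| ^ n))⁻¹ • volume.restrict (c • S) := by
    have h := e.restrict_map volume (c • S)
    rw [show e ⁻¹' (c • S) = S from ext fun x => smul_mem_smul_set_iff₀ hc S x] at h
    change (volume.map (c • ·)).restrict (c • S) = (volume.restrict S).map (c • ·) at h
    rw [← h, Measure.map_addHaar_smul volume hc, Measure.restrict_smul, finrank_euclideanSpace_fin,
      ← inv_pow, abs_pow, abs_inv, inv_pow, ENNReal.ofReal_inv_of_pos (by positivity)]
  rw [unif, unif, Measure.map_smul, hrestrict, smul_smul, Measure.addHaar_smul,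
    finrank_euclideanSpace_fin, abs_pow, ENNReal.mul_inv (.inl hk) (.inl ENNReal.ofReal_ne_top),
    mul_comm]

lemma eLpNorm_id_unif_ne_top {S : Set (EuclideanSpace ℝ (Fin n))} (hS : MeasurableSet S)
    (hS_bdd : Bornology.IsBounded S) : eLpNorm id 2 (unif S) ≠ ∞ := by
  obtain ⟨C, hC⟩ := hS_bdd.exists_norm_le
  have : IsFiniteMeasure (unif S) :=
    inferInstanceAs (IsFiniteMeasure (ProbabilityTheory.cond volume S))
  have hbound : ∀ᵐ x ∂(unif S), ‖id x‖ ≤ C :=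
    (ProbabilityTheory.ae_cond_mem hS).mono hC
  exact ((MemLp.of_bound aestronglyMeasurable_id C hbound).eLpNorm_lt_top).ne

lemma eLpNorm_id_unif_ball_le {r : ℝ} {A : Set (EuclideanSpace ℝ (Fin n))} (hA : MeasurableSet A)
    (hA_vol : volume A = volume (ball (0 : EuclideanSpace ℝ (Fin n)) r)) :
    eLpNorm id 2 (unif (ball (0 : EuclideanSpace ℝ (Fin n)) r)) ≤ eLpNorm id 2 (unif A) := by
  rw [unif, unif, eLpNorm_smul_measure_of_ne_top ENNReal.ofNat_ne_top,
    eLpNorm_smul_measure_of_ne_top ENNReal.ofNat_ne_top, hA_vol, smul_eq_mul, smul_eq_mul]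
  refine mul_le_mul_right ?_ _
  simp only [eLpNorm_eq_lintegral_rpow_enorm_toReal two_ne_zero ENNReal.ofNat_ne_top,
    ENNReal.toReal_ofNat]
  refine ENNReal.rpow_le_rpow ?_ (by norm_num)
  refine setLIntegral_sublevel_le volume hA measurableSet_ball hA_vol measure_ball_lt_top.ne
    ?_ (ENNReal.ofReal r ^ (2 : ℝ)) (fun x hx => ?_) (fun x hx => ?_)
  · fun_prop
  · rw [mem_ball_zero_iff] at hx
    gcongr
    rw [id, ← ofReal_norm]
    exact ENNReal.ofReal_le_ofReal hx.le
  · rw [mem_ball_zero_iff, not_lt] at hx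
    gcongr
    rw [id, ← ofReal_norm]
    exact ENNReal.ofReal_le_ofReal hx

end Uniform

theorem iso_wasserstein_inequality_general (n : ℕ) (r₁ r₂ : ℝ)
    (hr₁ : 0 < r₁) (hr₁₂ : r₁ ≤ r₂)
    (A : Set (EuclideanSpace ℝ (Fin n))) (hA : MeasurableSet A)
    (hAvol : volume A = volume (ball (0 : EuclideanSpace ℝ (Fin n)) r₂)) :
    W2 (unif A) (unif (ball (0 : EuclideanSpace ℝ (Fin n)) r₁)) ≥
      W2 (unif (ball (0 : EuclideanSpace ℝ (Fin n)) r₂))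
        (unif (ball (0 : EuclideanSpace ℝ (Fin n)) r₁)) := by
  have hc : 1 ≤ r₂ / r₁ := (one_le_div hr₁).2 hr₁₂
  have hdilate : (unif (ball (0 : EuclideanSpace ℝ (Fin n)) r₁)).map ((r₂ / r₁) • ·)
      = unif (ball 0 r₂) := by
    have hc₀ : r₂ / r₁ ≠ 0 := (zero_lt_one.trans_le hc).ne'
    rw [map_smul_unif hc₀, _root_.smul_ball hc₀, smul_zero,
      Real.norm_of_nonneg (zero_le_one.trans hc), div_mul_cancel₀ r₂ hr₁.ne']
  rw [ge_iff_le, ← hdilate,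
    W2_map_smul_eq hc _ (eLpNorm_id_unif_ne_top measurableSet_ball isBounded_ball), hdilate]
  exact (tsub_le_tsub_right (eLpNorm_id_unif_ball_le hA hAvol) _).trans
    (eLpNorm_id_sub_le_W2 _ _)

/-- **Iso-Wasserstein inequality.** Let `0 < r₁ ≤ r₂ ≤ R` and let `B_{r₁}, B_{r₂}` be
concentric open balls centered at the origin of `ℝⁿ`. For every measurable `A ⊆ B(0, R)`
with `vol(A) = vol(B_{r₂})`, one has `W₂(P_A, P_{B_{r₁}}) ≥ W₂(P_{B_{r₂}}, P_{B_{r₁}})`: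
among all subsets of `B(0, R)` of a fixed volume, the concentric ball minimizes the
`L²`-Wasserstein distance of its uniform measure to that of a smaller concentric ball. -/
theorem iso_wasserstein_inequality (n : ℕ) (hn : 1 ≤ n) (R r₁ r₂ : ℝ)
    (hr₁ : 0 < r₁) (hr₁₂ : r₁ ≤ r₂) (hr₂R : r₂ ≤ R)
    (A : Set (EuclideanSpace ℝ (Fin n))) (hA : MeasurableSet A)
    (hAsub : A ⊆ ball (0 : EuclideanSpace ℝ (Fin n)) R)
    (hAvol : volume A = volume (ball (0 : EuclideanSpace ℝ (Fin n)) r₂)) :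
    W2 (unif A) (unif (ball (0 : EuclideanSpace ℝ (Fin n)) r₁)) ≥
      W2 (unif (ball (0 : EuclideanSpace ℝ (Fin n)) r₂))
        (unif (ball (0 : EuclideanSpace ℝ (Fin n)) r₁)) :=
  iso_wasserstein_inequality_general n r₁ r₂ hr₁ hr₁₂ A hA hAvol

end
end

section
/- (Monotonicity of volume comparison) Let n ≥ 1 and 0 < r₂ ≤ r₁, and let B_{r₁} = B(0, r₁) and B_{r₂} = B(0, r₂) be concentric open balls in ℝⁿ centered at the origin. Then for every measurable set A ⊆ ℝⁿ with vol_n(B_{r₁}) ≤ vol_n(A) < ∞, one has W₂(P_A, P_{B_{r₂}}) ≥ W₂(P_{B_{r₁}}, P_{B_{r₂}}). -/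
open MeasureTheory Metric Set
open scoped ENNReal NNReal

noncomputable section

/-!
Put `c = r₂ / r₁`. The dilation `x ↦ c • x` pushes `P_{B_{r₁}}` forward to `P_{B_{r₂}}` at cost
`(1 - c)² m`, where `m = ∫ ‖x‖² dP_{B_{r₁}}`; this bounds the right-hand side.

For the left-hand side, since `vol A ≥ vol B_{r₁}`, every sublevel set of `‖·‖` (which either lies
inside `B_{r₁}` or contains it) has smaller `P_A`-mass than `P_{B_{r₁}}`-mass, so by the layer-cake
formula `∫ ‖x‖² dP_A ≥ m`. Now let `γ` couple `P_A` and `P_{B_{r₂}}`, and write `q = ‖y‖ / c`, whose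
law under `P_{B_{r₂}}` is that of `‖·‖` under `P_{B_{r₁}}`. Integrating the pointwise inequality
`(1 - c) p² ≤ (p - c q)² + c (1 - c) q²` (the difference is `c (p - q)²`) against `γ` gives
`∫ ‖x - y‖² dγ ≥ ∫ (‖x‖ - ‖y‖)² dγ ≥ (1 - c) ∫ ‖x‖² dP_A - c (1 - c) m ≥ (1 - c)² m`.
-/

open ProbabilityTheory

section Moments

variable {α β : Type*} [MeasurableSpace α] [MeasurableSpace β]

theorem lintegral_ofReal_le_lintegral_ofReal_of_tail_le {μ : Measure α} {ν : Measure β}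
    {f : α → ℝ} {g : β → ℝ} (hf0 : 0 ≤ᵐ[μ] f) (hf : AEMeasurable f μ) (hg0 : 0 ≤ᵐ[ν] g)
    (hg : AEMeasurable g ν) (htail : ∀ t, ν {y | t < g y} ≤ μ {x | t < f x}) :
    ∫⁻ y, ENNReal.ofReal (g y) ∂ν ≤ ∫⁻ x, ENNReal.ofReal (f x) ∂μ := by
  rw [lintegral_eq_lintegral_meas_lt ν hg0 hg, lintegral_eq_lintegral_meas_lt μ hf0 hf]
  exact lintegral_mono fun t => htail t

theorem ofReal_one_sub_mul_sq_le {c : ℝ} (hc0 : 0 ≤ c) (hc1 : c ≤ 1) (p q : ℝ) :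
    ENNReal.ofReal (1 - c) * ENNReal.ofReal (p ^ 2)
      ≤ ENNReal.ofReal ((p - c * q) ^ 2)
          + ENNReal.ofReal (c * (1 - c)) * ENNReal.ofReal (q ^ 2) := by
  have hc1' : 0 ≤ 1 - c := sub_nonneg.2 hc1
  rw [← ENNReal.ofReal_mul hc1', ← ENNReal.ofReal_mul (mul_nonneg hc0 hc1'),
    ← ENNReal.ofReal_add (sq_nonneg _) (by positivity)]
  exact ENNReal.ofReal_le_ofReal (by nlinarith [mul_nonneg hc0 (sq_nonneg (p - q))])

theorem ofReal_one_sub_sq_mul_le_lintegral_sq_sub {γ : Measure (α × β)} {μ : Measure α}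
    {ν : Measure β} (hγμ : γ.map Prod.fst = μ) (hγν : γ.map Prod.snd = ν) {f : α → ℝ}
    {g : β → ℝ} (hf : Measurable f) (hg : Measurable g)
    (hmom : ∫⁻ y, ENNReal.ofReal (g y ^ 2) ∂ν ≤ ∫⁻ x, ENNReal.ofReal (f x ^ 2) ∂μ)
    (hfin : ∫⁻ y, ENNReal.ofReal (g y ^ 2) ∂ν ≠ ⊤) {c : ℝ} (hc0 : 0 ≤ c) (hc1 : c ≤ 1) :
    ENNReal.ofReal ((1 - c) ^ 2) * ∫⁻ y, ENNReal.ofReal (g y ^ 2) ∂ν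
      ≤ ∫⁻ w, ENNReal.ofReal ((f w.1 - c * g w.2) ^ 2) ∂γ := by
  subst hγμ hγν
  set m := ∫⁻ y, ENNReal.ofReal (g y ^ 2) ∂γ.map Prod.snd
  have hint : ENNReal.ofReal (1 - c) * ∫⁻ x, ENNReal.ofReal (f x ^ 2) ∂γ.map Prod.fst
      ≤ (∫⁻ w, ENNReal.ofReal ((f w.1 - c * g w.2) ^ 2) ∂γ) + ENNReal.ofReal (c * (1 - c)) * m := by
    rw [lintegral_map (by fun_prop) measurable_fst,
      show m = ∫⁻ w, ENNReal.ofReal (g w.2 ^ 2) ∂γ from lintegral_map (by fun_prop) measurable_snd,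
      ← lintegral_const_mul _ (by fun_prop),
      ← lintegral_const_mul _ (by fun_prop), ← lintegral_add_right _ (by fun_prop)]
    exact lintegral_mono fun w => ofReal_one_sub_mul_sq_le hc0 hc1 _ _
  rw [← ENNReal.add_le_add_iff_right (ENNReal.mul_ne_top ENNReal.ofReal_ne_top hfin)]
  calc ENNReal.ofReal ((1 - c) ^ 2) * m + ENNReal.ofReal (c * (1 - c)) * m
      = ENNReal.ofReal (1 - c) * m := by
        rw [← add_mul, ← ENNReal.ofReal_add (by positivity) (by nlinarith)]
        ring_nf
    _ ≤ ENNReal.ofReal (1 - c) * ∫⁻ x, ENNReal.ofReal (f x ^ 2) ∂γ.map Prod.fst := by gcongr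
    _ ≤ _ := hint

end Moments

section Conditioning

variable {Ω Ω' : Type*} [MeasurableSpace Ω] [MeasurableSpace Ω'] {μ : Measure Ω} {S A K : Set Ω}

theorem cond_le_cond_of_subset_of_measure_le (hK : MeasurableSet K) (hKS : K ⊆ S)
    (hSA : μ S ≤ μ A) : μ[K|A] ≤ μ[K|S] :=
  calc μ[K|A] = (μ A)⁻¹ * μ (A ∩ K) := cond_apply' hK μ
    _ ≤ (μ S)⁻¹ * μ K := mul_le_mul' (ENNReal.inv_le_inv.2 hSA) (measure_mono inter_subset_right)
    _ = μ[K|S] := by rw [cond_apply' hK, inter_eq_right.2 hKS]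

theorem cond_compl_le_cond_compl (hK : MeasurableSet K) (hKS : K ⊆ S ∨ S ⊆ K)
    (hSA : μ S ≤ μ A) (hS0 : μ S ≠ 0) (hS : μ S ≠ ∞) (hA : μ A ≠ ∞) : μ[Kᶜ|S] ≤ μ[Kᶜ|A] := by
  have hA0 : μ A ≠ 0 := fun h => hS0 (le_zero_iff.1 (h ▸ hSA))
  have := cond_isProbabilityMeasure_of_finite hS0 hS
  have := cond_isProbabilityMeasure_of_finite hA0 hA
  rw [prob_compl_eq_one_sub hK, prob_compl_eq_one_sub hK]
  refine tsub_le_tsub_left ?_ 1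
  rcases hKS with hKS | hSK
  · exact cond_le_cond_of_subset_of_measure_le hK hKS hSA
  · refine prob_le_one.trans_eq ?_
    rw [cond_apply' hK, inter_eq_left.2 hSK, ENNReal.inv_mul_cancel hS0 hS]

theorem map_cond_preimage_of_map_eq_smul {ν : Measure Ω'} {f : Ω → Ω'} (hf : Measurable f)
    {k : ℝ≥0∞} (hμν : μ.map f = k • ν) (hk0 : k ≠ 0) (hk : k ≠ ∞) {t : Set Ω'}
    (ht : MeasurableSet t) : (μ[|f ⁻¹' t]).map f = ν[|t] := by
  have hinv : (k * ν t)⁻¹ * k = (ν t)⁻¹ := by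
    rw [ENNReal.mul_inv (Or.inl hk0) (Or.inl hk), mul_right_comm, ENNReal.inv_mul_cancel hk0 hk,
      one_mul]
  rw [ProbabilityTheory.cond, Measure.map_smul, ← Measure.restrict_map hf ht, hμν,
    Measure.restrict_smul, smul_smul, ← Measure.map_apply hf ht, hμν, Measure.smul_apply,
    smul_eq_mul, hinv, ProbabilityTheory.cond]

end Conditioning

section NormedSpace

variable {E : Type*} [NormedAddCommGroup E]

theorem preimage_smul_ball_zero [NormedSpace ℝ E] {c : ℝ} (hc : 0 < c) (r : ℝ) :
    (c • ·) ⁻¹' ball (0 : E) (c * r) = ball 0 r := by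
  ext x
  simp [norm_smul, abs_of_pos hc, mul_lt_mul_iff_right₀ hc]

variable [MeasurableSpace E] [BorelSpace E]

theorem lintegral_ofReal_norm_sq_cond_ball_ne_top (μ : Measure E) (r : ℝ) :
    ∫⁻ x, ENNReal.ofReal (‖x‖ ^ 2) ∂μ[|ball 0 r] ≠ ∞ := by
  refine ne_top_of_le_ne_top (b := ENNReal.ofReal (r ^ 2) * μ[|ball 0 r] univ)
    (ENNReal.mul_ne_top ENNReal.ofReal_ne_top (measure_ne_top _ _)) ?_
  rw [← lintegral_const]
  refine lintegral_mono_ae ((ae_cond_mem measurableSet_ball).mono fun x hx => ?_)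
  exact ENNReal.ofReal_le_ofReal (pow_le_pow_left₀ (norm_nonneg _) (mem_ball_zero_iff.1 hx).le 2)

variable [NormedSpace ℝ E]

theorem lintegral_edist_smul_sq (ν : Measure E) (c : ℝ) :
    ∫⁻ x, edist x (c • x) ^ 2 ∂ν
      = ENNReal.ofReal ((1 - c) ^ 2) * ∫⁻ x, ENNReal.ofReal (‖x‖ ^ 2) ∂ν := by
  rw [← lintegral_const_mul _ (by fun_prop)]
  refine lintegral_congr fun x => ?_
  have hsub : x - c • x = (1 - c) • x := by rw [sub_smul, one_smul]
  rw [edist_dist, ← ENNReal.ofReal_pow dist_nonneg, ← ENNReal.ofReal_mul (sq_nonneg _),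
    dist_eq_norm, hsub, norm_smul, mul_pow, Real.norm_eq_abs, sq_abs]

variable [FiniteDimensional ℝ E] {μ : Measure E} [μ.IsAddHaarMeasure]

theorem map_smul_cond_ball {c : ℝ} (hc : 0 < c) (r : ℝ) :
    (μ[|ball 0 r]).map (c • ·) = μ[|ball 0 (c * r)] := by
  rw [← preimage_smul_ball_zero hc r]
  refine map_cond_preimage_of_map_eq_smul (measurable_const_smul c)
    (Measure.map_addHaar_smul μ hc.ne') ?_ ENNReal.ofReal_ne_top measurableSet_ball
  exact (ENNReal.ofReal_pos.2 (abs_pos.2 (inv_ne_zero (pow_ne_zero _ hc.ne')))).ne'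

theorem lintegral_ofReal_norm_sq_cond_ball_le {A : Set E} {r : ℝ} (hr : 0 < r)
    (hA : μ (ball 0 r) ≤ μ A) (hAfin : μ A ≠ ∞) :
    ∫⁻ x, ENNReal.ofReal (‖x‖ ^ 2) ∂μ[|ball 0 r] ≤ ∫⁻ x, ENNReal.ofReal (‖x‖ ^ 2) ∂μ[|A] := by
  refine lintegral_ofReal_le_lintegral_ofReal_of_tail_le (ae_of_all _ fun x => sq_nonneg _)
    (by fun_prop) (ae_of_all _ fun x => sq_nonneg _) (by fun_prop) fun t => ?_
  have hcompl : {x : E | t < ‖x‖ ^ 2} = {x | ‖x‖ ^ 2 ≤ t}ᶜ := by ext; simp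
  rw [hcompl]
  refine cond_compl_le_cond_compl (measurableSet_le (by fun_prop) measurable_const) ?_ hA
    (measure_ball_pos μ 0 hr).ne' measure_ball_lt_top.ne hAfin
  rcases lt_or_ge t (r ^ 2) with ht | ht
  · refine Or.inl fun x hx => mem_ball_zero_iff.2 ?_
    exact (pow_lt_pow_iff_left₀ (norm_nonneg _) hr.le two_ne_zero).1 (hx.trans_lt ht)
  · refine Or.inr fun x hx => ?_
    exact (pow_lt_pow_left₀ (mem_ball_zero_iff.1 hx) (norm_nonneg _) two_ne_zero).le.trans ht

end NormedSpace

section Wasserstein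

variable {n : ℕ}

theorem unif_eq_cond (S : Set (EuclideanSpace ℝ (Fin n))) : unif S = volume[|S] := rfl

theorem map_prodMk_mem_couplings {μ : Measure (EuclideanSpace ℝ (Fin n))}
    {f : EuclideanSpace ℝ (Fin n) → EuclideanSpace ℝ (Fin n)} (hf : Measurable f) :
    μ.map (fun x => (x, f x)) ∈ couplings μ (μ.map f) := by
  constructor
  · rw [Measure.map_map measurable_fst (by fun_prop : Measurable fun x => (x, f x))]
    exact Measure.map_id
  · rw [Measure.map_map measurable_snd (by fun_prop : Measurable fun x => (x, f x))]
    rfl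

theorem W2_le_of_mem_couplings {μ ν : Measure (EuclideanSpace ℝ (Fin n))}
    {γ : Measure (EuclideanSpace ℝ (Fin n) × EuclideanSpace ℝ (Fin n))}
    (hγ : γ ∈ couplings μ ν) : W2 μ ν ≤ (∫⁻ w, edist w.1 w.2 ^ 2 ∂γ) ^ (1 / 2 : ℝ) :=
  iInf₂_le γ hγ

theorem le_W2_of_forall_le {μ ν : Measure (EuclideanSpace ℝ (Fin n))} {C : ℝ≥0∞}
    (h : ∀ γ ∈ couplings μ ν, C ≤ ∫⁻ w, edist w.1 w.2 ^ 2 ∂γ) : C ^ (1 / 2 : ℝ) ≤ W2 μ ν :=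
  le_iInf₂ fun γ hγ => ENNReal.rpow_le_rpow (h γ hγ) (by norm_num)

theorem W2_unif_ball_unif_ball_mul_le {c : ℝ} (hc : 0 < c) (r : ℝ) :
    W2 (unif (ball (0 : EuclideanSpace ℝ (Fin n)) r)) (unif (ball 0 (c * r)))
      ≤ (ENNReal.ofReal ((1 - c) ^ 2)
          * ∫⁻ x, ENNReal.ofReal (‖x‖ ^ 2) ∂unif (ball (0 : EuclideanSpace ℝ (Fin n)) r))
          ^ (1 / 2 : ℝ) := by
  have hγ := map_prodMk_mem_couplings (μ := unif (ball (0 : EuclideanSpace ℝ (Fin n)) r))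
    (measurable_const_smul c)
  rw [unif_eq_cond, map_smul_cond_ball hc r, ← unif_eq_cond] at hγ
  refine (W2_le_of_mem_couplings hγ).trans_eq ?_
  rw [lintegral_map (by fun_prop) (by fun_prop), lintegral_edist_smul_sq]

theorem ofReal_one_sub_sq_mul_le_of_mem_couplings {A : Set (EuclideanSpace ℝ (Fin n))}
    {c r : ℝ} (hc0 : 0 < c) (hc1 : c ≤ 1) (hr : 0 < r)
    (hAvol : volume (ball (0 : EuclideanSpace ℝ (Fin n)) r) ≤ volume A) (hAfin : volume A ≠ ⊤)
    {γ : Measure (EuclideanSpace ℝ (Fin n) × EuclideanSpace ℝ (Fin n))}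
    (hγ : γ ∈ couplings (unif A) (unif (ball 0 (c * r)))) :
    ENNReal.ofReal ((1 - c) ^ 2)
        * ∫⁻ x, ENNReal.ofReal (‖x‖ ^ 2) ∂unif (ball (0 : EuclideanSpace ℝ (Fin n)) r)
      ≤ ∫⁻ w, edist w.1 w.2 ^ 2 ∂γ := by
  have hrescale : ∫⁻ y, ENNReal.ofReal ((c⁻¹ * ‖y‖) ^ 2)
        ∂unif (ball (0 : EuclideanSpace ℝ (Fin n)) (c * r))
      = ∫⁻ x, ENNReal.ofReal (‖x‖ ^ 2) ∂unif (ball (0 : EuclideanSpace ℝ (Fin n)) r) := by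
    rw [unif_eq_cond, ← map_smul_cond_ball hc0 r, lintegral_map (by fun_prop) (by fun_prop)]
    refine lintegral_congr fun x => ?_
    rw [norm_smul, Real.norm_eq_abs, abs_of_pos hc0, inv_mul_cancel_left₀ hc0.ne']
  have key := ofReal_one_sub_sq_mul_le_lintegral_sq_sub hγ.1 hγ.2 measurable_norm
    (measurable_norm.const_mul c⁻¹)
    (hrescale ▸ lintegral_ofReal_norm_sq_cond_ball_le hr hAvol hAfin)
    (hrescale ▸ lintegral_ofReal_norm_sq_cond_ball_ne_top _ _) hc0.le hc1
  rw [hrescale] at key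
  refine key.trans (lintegral_mono fun w => ?_)
  rw [mul_inv_cancel_left₀ hc0.ne', edist_dist, ← ENNReal.ofReal_pow dist_nonneg, ← sq_abs]
  exact ENNReal.ofReal_le_ofReal (pow_le_pow_left₀ (abs_nonneg _)
    ((abs_norm_sub_norm_le _ _).trans_eq (dist_eq_norm _ _).symm) 2)

end Wasserstein

theorem monotonicity_of_volume_comparison_general (n : ℕ) (r₁ r₂ : ℝ)
    (hr₂ : 0 < r₂) (hr₂₁ : r₂ ≤ r₁)
    (A : Set (EuclideanSpace ℝ (Fin n)))
    (hAvol : volume (ball (0 : EuclideanSpace ℝ (Fin n)) r₁) ≤ volume A)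
    (hAfin : volume A ≠ ⊤) :
    W2 (unif A) (unif (ball (0 : EuclideanSpace ℝ (Fin n)) r₂)) ≥
      W2 (unif (ball (0 : EuclideanSpace ℝ (Fin n)) r₁))
        (unif (ball (0 : EuclideanSpace ℝ (Fin n)) r₂)) := by
  have hr₁ : 0 < r₁ := hr₂.trans_le hr₂₁
  set c := r₂ / r₁
  have hc0 : 0 < c := div_pos hr₂ hr₁
  have hc1 : c ≤ 1 := (div_le_one hr₁).2 hr₂₁
  have hr₂c : r₂ = c * r₁ := (div_mul_cancel₀ r₂ hr₁.ne').symm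
  rw [hr₂c]
  exact (W2_unif_ball_unif_ball_mul_le hc0 r₁).trans
    (le_W2_of_forall_le fun γ hγ =>
      ofReal_one_sub_sq_mul_le_of_mem_couplings hc0 hc1 hr₁ hAvol hAfin hγ)

/-- **Monotonicity of volume comparison.** Let `0 < r₂ ≤ r₁` and let
`B_{r₁}, B_{r₂} ⊆ ℝⁿ` be concentric open balls centered at the origin. Then for every
measurable `A ⊆ ℝⁿ` with `vol(B_{r₁}) ≤ vol(A) < ∞`, one has
`W₂(P_A, P_{B_{r₂}}) ≥ W₂(P_{B_{r₁}}, P_{B_{r₂}})`. -/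
theorem monotonicity_of_volume_comparison (n : ℕ) (hn : 1 ≤ n) (r₁ r₂ : ℝ)
    (hr₂ : 0 < r₂) (hr₂₁ : r₂ ≤ r₁)
    (A : Set (EuclideanSpace ℝ (Fin n))) (hA : MeasurableSet A)
    (hAvol : volume (ball (0 : EuclideanSpace ℝ (Fin n)) r₁) ≤ volume A)
    (hAfin : volume A ≠ ⊤) :
    W2 (unif A) (unif (ball (0 : EuclideanSpace ℝ (Fin n)) r₂)) ≥
      W2 (unif (ball (0 : EuclideanSpace ℝ (Fin n)) r₁))
        (unif (ball (0 : EuclideanSpace ℝ (Fin n)) r₂)) :=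
  monotonicity_of_volume_comparison_general n r₁ r₂ hr₂ hr₂₁ A hAvol hAfin

end
end
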